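/- Let G be a forest with a distant edge {w,v} (v a distant leaf with neighbor w). Then for all 2 ≤ k ≤ ν(G), aim(G \ {w,v}, k-1) + 1 ≤ aim(G,k). -/

import Mathlib

/-!
Take a maximum `(k-1)`-admissible matching `M` of `G \ {w,v}`; it is also `(k-1)`-admissible in
`G`, and we add the edge `vw`. As `v` is a leaf, `vw` forms a gap with every edge of `M` that
avoids the neighbourhood of `w`. If no edge of `M` meets that neighbourhood, `{vw}` becomes a new
part. Otherwise the edge of `M` meeting it must contain the unique non-leaf neighbour of `w`
(a leaf neighbour would have `w` as its partner), so it is a single edge `f₀`; putting `vw` into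
the part of `f₀` adds an edge without adding a part, which the step from `k-1` to `k` pays for.
Since `G` is a forest, every part still induces a forest.
-/


open scoped Classical

noncomputable section

/-- `M` is a matching of `G`: a set of edges of `G` that are pairwise vertex-disjoint. -/
def IsMatchingSet {V : Type*} (G : SimpleGraph V) (M : Finset (Sym2 V)) : Prop :=
  (∀ e ∈ M, e ∈ G.edgeSet) ∧
    ∀ e ∈ M, ∀ f ∈ M, e ≠ f → ∀ v : V, v ∈ e → v ∉ f

/-- The matching number `ν(G)`: the maximum size of a matching of `G`. -/
def matchingNumber {V : Type*} [Fintype V] (G : SimpleGraph V) : ℕ :=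
  sSup {k | ∃ M : Finset (Sym2 V), IsMatchingSet G M ∧ M.card = k}

/-- Two edges `e, f` form a gap in `G`: they are vertex-disjoint and no edge of `G`
joins an endpoint of `e` to an endpoint of `f` (an induced matching of size 2). -/
def IsGap {V : Type*} (G : SimpleGraph V) (e f : Sym2 V) : Prop :=
  (∀ v : V, v ∈ e → v ∉ f) ∧ ∀ u v : V, u ∈ e → v ∈ f → ¬ G.Adj u v

/-- The set of vertices covered by a set of edges `M`. -/
def matchVerts {V : Type*} (M : Finset (Sym2 V)) : Set V := {v | ∃ e ∈ M, v ∈ e}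

/-- `M` is a `k`-admissible matching of `G`: a matching admitting a partition into
nonempty parts `M₁, …, M_r` such that edges from distinct parts form gaps in `G`,
`|M₁| + ⋯ + |M_r| ≤ r + k - 1`, and the induced subgraph on the vertices of each
part is a forest. -/
def IsAdmissibleMatching {V : Type*} (G : SimpleGraph V) (k : ℕ)
    (M : Finset (Sym2 V)) : Prop :=
  IsMatchingSet G M ∧
    ∃ P : Finset (Finset (Sym2 V)),
      (∀ p ∈ P, p.Nonempty) ∧
      (∀ p ∈ P, ∀ q ∈ P, p ≠ q → Disjoint p q) ∧
      P.biUnion id = M ∧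
      (∀ p ∈ P, ∀ q ∈ P, p ≠ q → ∀ e ∈ p, ∀ f ∈ q, IsGap G e f) ∧
      M.card + 1 ≤ P.card + k ∧
      ∀ p ∈ P, (SimpleGraph.induce (matchVerts p) G).IsAcyclic

/-- The `k`-admissible matching number `aim(G,k)`: the maximum size of a
`k`-admissible matching of `G` (`0` if none exists). -/
def aim {V : Type*} [Fintype V] (G : SimpleGraph V) (k : ℕ) : ℕ :=
  sSup {m | ∃ M : Finset (Sym2 V), IsAdmissibleMatching G k M ∧ M.card = m}


/-- The graph obtained from `G` by deleting the vertices in `s` (keeping the same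
vertex type; deleted vertices become isolated). -/
def delV {V : Type*} (G : SimpleGraph V) (s : Set V) : SimpleGraph V where
  Adj u v := G.Adj u v ∧ u ∉ s ∧ v ∉ s
  symm := ⟨fun u v h => ⟨h.1.symm, h.2.2, h.2.1⟩⟩
  loopless := ⟨fun v h => G.loopless.irrefl v h.1⟩

open Finset

section

variable {V : Type*}

section Gap

variable {G : SimpleGraph V} {e f : Sym2 V}

lemma IsGap.symm (h : IsGap G e f) : IsGap G f e :=
  ⟨fun u huf hue => h.1 u hue huf, fun a b ha hb hab => h.2 b a hb ha hab.symm⟩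

lemma IsGap.ne (h : IsGap G e f) : e ≠ f := by
  rintro rfl
  exact h.1 _ e.out_fst_mem e.out_fst_mem

lemma disjoint_of_forall_isGap {p q : Finset (Sym2 V)}
    (h : ∀ e ∈ p, ∀ f ∈ q, IsGap G e f) : Disjoint p q :=
  disjoint_left.2 fun e hp hq => (h e hp e hq).ne rfl

lemma isGap_mk {v w : V} (hv : ∀ u ∈ f, u ≠ v ∧ ¬ G.Adj v u)
    (hw : ∀ u ∈ f, u ≠ w ∧ ¬ G.Adj w u) : IsGap G s(v, w) f := by
  refine ⟨fun u hu huf => ?_, fun a b ha hb => ?_⟩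
  · rcases Sym2.mem_iff.1 hu with rfl | rfl
    exacts [(hv u huf).1 rfl, (hw u huf).1 rfl]
  · rcases Sym2.mem_iff.1 ha with rfl | rfl
    exacts [(hv b hb).2, (hw b hb).2]

end Gap

lemma IsMatchingSet.insert {G : SimpleGraph V} {M : Finset (Sym2 V)} {e : Sym2 V}
    (hM : IsMatchingSet G M) (he : e ∈ G.edgeSet) (hdisj : ∀ f ∈ M, ∀ u ∈ e, u ∉ f) :
    IsMatchingSet G (insert e M) := by
  refine ⟨fun f hf => ?_, fun f hf f' hf' hne u hu hu' => ?_⟩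
  · rcases mem_insert.1 hf with rfl | hfM
    exacts [he, hM.1 f hfM]
  · rcases mem_insert.1 hf with rfl | hfM <;> rcases mem_insert.1 hf' with rfl | hfM'
    exacts [hne rfl, hdisj f' hfM' u hu hu', hdisj f hfM u hu' hu, hM.2 f hfM f' hfM' hne u hu hu']

lemma isAcyclic_induce_matchVerts_singleton (G : SimpleGraph V) (e : Sym2 V) :
    (G.induce (matchVerts {e})).IsAcyclic := by
  refine SimpleGraph.IsAcyclic.of_card_le_two ?_
  induction e using Sym2.ind with
  | _ a b =>
    have : matchVerts {s(a, b)} = ({a, b} : Set V) := by ext; simp [matchVerts]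
    rw [this]
    exact (Set.encard_insert_le _ a).trans (by norm_num)

section Partition

variable {G : SimpleGraph V} {k : ℕ} {M : Finset (Sym2 V)}

/-- Disjointness of the parts is not recorded: it follows from the gap condition. -/
structure IsAdmissiblePartition (G : SimpleGraph V) (k : ℕ) (M : Finset (Sym2 V))
    (P : Finset (Finset (Sym2 V))) : Prop where
  nonempty : ∀ p ∈ P, p.Nonempty
  biUnion_eq : P.biUnion id = M
  isGap : ∀ p ∈ P, ∀ q ∈ P, p ≠ q → ∀ e ∈ p, ∀ f ∈ q, IsGap G e f
  card_le : M.card + 1 ≤ P.card + k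
  isAcyclic : ∀ p ∈ P, (G.induce (matchVerts p)).IsAcyclic

lemma isAdmissibleMatching_iff :
    IsAdmissibleMatching G k M ↔ IsMatchingSet G M ∧ ∃ P, IsAdmissiblePartition G k M P := by
  constructor
  · rintro ⟨hM, P, hne, -, hU, hgap, hcard, hacyc⟩
    exact ⟨hM, P, hne, hU, hgap, hcard, hacyc⟩
  · rintro ⟨hM, P, hne, hU, hgap, hcard, hacyc⟩
    exact ⟨hM, P, hne, fun p hp q hq hpq => disjoint_of_forall_isGap (hgap p hp q hq hpq),
      hU, hgap, hcard, hacyc⟩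

namespace IsAdmissiblePartition

variable {P : Finset (Finset (Sym2 V))} {e : Sym2 V}

lemma mem_iff (hP : IsAdmissiblePartition G k M P) : e ∈ M ↔ ∃ p ∈ P, e ∈ p := by
  simp [← hP.biUnion_eq]

lemma disjoint (hP : IsAdmissiblePartition G k M P) {p q : Finset (Sym2 V)} (hp : p ∈ P)
    (hq : q ∈ P) (hpq : p ≠ q) : Disjoint p q :=
  disjoint_of_forall_isGap (hP.isGap p hp q hq hpq)

lemma mono {k' : ℕ} (hP : IsAdmissiblePartition G k M P) (hk : k ≤ k') :
    IsAdmissiblePartition G k' M P :=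
  { hP with card_le := hP.card_le.trans (by omega) }

lemma insert_singleton (hP : IsAdmissiblePartition G k M P) (hgap : ∀ f ∈ M, IsGap G e f) :
    IsAdmissiblePartition G k (insert e M) (insert {e} P) := by
  have heM : e ∉ M := fun h => (hgap e h).ne rfl
  have hnew : {e} ∉ P := fun h => heM (hP.mem_iff.2 ⟨_, h, mem_singleton_self e⟩)
  have hgap' : ∀ q ∈ P, ∀ f ∈ q, IsGap G e f := fun q hq f hf => hgap f (hP.mem_iff.2 ⟨q, hq, hf⟩)
  refine ⟨?_, ?_, ?_, ?_, ?_⟩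
  · simpa using hP.nonempty
  · rw [biUnion_insert, hP.biUnion_eq, insert_eq, id]
  · simp only [mem_insert]
    rintro p (rfl | hp) q (rfl | hq) hpq e' he' f hf
    exacts [absurd rfl hpq, mem_singleton.1 he' ▸ hgap' q hq f hf,
      (mem_singleton.1 hf ▸ hgap' p hp e' he').symm, hP.isGap p hp q hq hpq e' he' f hf]
  · rw [card_insert_of_notMem heM, card_insert_of_notMem hnew]
    have := hP.card_le
    omega
  · simpa using ⟨isAcyclic_induce_matchVerts_singleton G e, hP.isAcyclic⟩

lemma insert_into {p₀ : Finset (Sym2 V)} (hP : IsAdmissiblePartition G k M P) (hp₀ : p₀ ∈ P)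
    (heM : e ∉ M) (hgap : ∀ f ∈ M, f ∉ p₀ → IsGap G e f)
    (hacyc : (G.induce (matchVerts (insert e p₀))).IsAcyclic) :
    IsAdmissiblePartition G (k + 1) (insert e M) (insert (insert e p₀) (P.erase p₀)) := by
  have hnew : insert e p₀ ∉ P.erase p₀ := fun h =>
    heM (hP.mem_iff.2 ⟨_, mem_of_mem_erase h, mem_insert_self e p₀⟩)
  have hgap' : ∀ q ∈ P, q ≠ p₀ → ∀ e' ∈ insert e p₀, ∀ f ∈ q, IsGap G e' f := by
    intro q hq hqp₀ e' he' f hf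
    rcases mem_insert.1 he' with rfl | he'
    · exact hgap f (hP.mem_iff.2 ⟨q, hq, hf⟩) (disjoint_right.1 (hP.disjoint hp₀ hq hqp₀.symm) hf)
    · exact hP.isGap p₀ hp₀ q hq hqp₀.symm e' he' f hf
  refine ⟨?_, ?_, ?_, ?_, ?_⟩
  · simpa using fun p _ hp => hP.nonempty p hp
  · rw [← hP.biUnion_eq]
    conv_rhs => rw [← insert_erase hp₀]
    simp only [biUnion_insert, id, insert_union]
  · simp only [mem_insert, mem_erase]
    rintro p (rfl | ⟨hpp₀, hp⟩) q (rfl | ⟨hqp₀, hq⟩) hpq e' he' f hf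
    exacts [absurd rfl hpq, hgap' q hq hqp₀ e' he' f hf, (hgap' p hp hpp₀ f hf e' he').symm,
      hP.isGap p hp q hq hpq e' he' f hf]
  · rw [card_insert_of_notMem heM, card_insert_of_notMem hnew, card_erase_of_mem hp₀]
    have := card_pos.2 ⟨p₀, hp₀⟩
    have := hP.card_le
    omega
  · simpa using ⟨hacyc, fun p _ hp => hP.isAcyclic p hp⟩

end IsAdmissiblePartition

end Partition

namespace IsAdmissibleMatching

variable {G : SimpleGraph V} {k : ℕ} {M : Finset (Sym2 V)} {e : Sym2 V}

lemma mono {k' : ℕ} (hM : IsAdmissibleMatching G k M) (hk : k ≤ k') :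
    IsAdmissibleMatching G k' M := by
  obtain ⟨hM, P, hP⟩ := isAdmissibleMatching_iff.1 hM
  exact isAdmissibleMatching_iff.2 ⟨hM, P, hP.mono hk⟩

lemma insert_of_forall_isGap (hM : IsAdmissibleMatching G k M) (he : e ∈ G.edgeSet)
    (hgap : ∀ f ∈ M, IsGap G e f) : IsAdmissibleMatching G k (insert e M) := by
  obtain ⟨hM, P, hP⟩ := isAdmissibleMatching_iff.1 hM
  exact isAdmissibleMatching_iff.2
    ⟨hM.insert he fun f hf u hu => (hgap f hf).1 u hu, _, hP.insert_singleton hgap⟩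

lemma insert_of_forall_ne_isGap {f₀ : Sym2 V} (hG : G.IsAcyclic) (hM : IsAdmissibleMatching G k M)
    (he : e ∈ G.edgeSet) (hf₀ : f₀ ∈ M) (he₀ : ∀ u ∈ e, u ∉ f₀)
    (hgap : ∀ f ∈ M, f ≠ f₀ → IsGap G e f) : IsAdmissibleMatching G (k + 1) (insert e M) := by
  obtain ⟨hM, P, hP⟩ := isAdmissibleMatching_iff.1 hM
  have hdisj : ∀ f ∈ M, ∀ u ∈ e, u ∉ f := fun f hf u hu => by
    rcases eq_or_ne f f₀ with rfl | hne
    exacts [he₀ u hu, (hgap f hf hne).1 u hu]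
  have heM : e ∉ M := fun h => hdisj e h _ e.out_fst_mem e.out_fst_mem
  obtain ⟨p₀, hp₀, hf₀p₀⟩ := hP.mem_iff.1 hf₀
  exact isAdmissibleMatching_iff.2 ⟨hM.insert he hdisj, _,
    hP.insert_into hp₀ heM (fun f hf hfp₀ => hgap f hf (ne_of_mem_of_not_mem hf₀p₀ hfp₀).symm)
      (hG.induce _)⟩

end IsAdmissibleMatching

section delV

variable {G : SimpleGraph V} {s : Set V}

lemma delV_le : delV G s ≤ G := fun _ _ h => h.1

lemma notMem_of_mem_edgeSet_delV {e : Sym2 V} (he : e ∈ (delV G s).edgeSet) {u : V}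
    (hu : u ∈ e) : u ∉ s := by
  induction e using Sym2.ind with
  | _ a b => rcases Sym2.mem_iff.1 hu with rfl | rfl; exacts [he.2.1, he.2.2]

lemma induce_delV_of_disjoint {t : Set V} (h : Disjoint t s) :
    (delV G s).induce t = G.induce t := by
  ext a b
  simp [delV, Set.disjoint_left.1 h a.2, Set.disjoint_left.1 h b.2]

lemma IsAdmissibleMatching.of_delV {k : ℕ} {M : Finset (Sym2 V)}
    (hM : IsAdmissibleMatching (delV G s) k M) : IsAdmissibleMatching G k M := by
  obtain ⟨hM, P, hP⟩ := isAdmissibleMatching_iff.1 hM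
  have hoff : ∀ f ∈ M, ∀ u ∈ f, u ∉ s := fun f hf _ => notMem_of_mem_edgeSet_delV (hM.1 f hf)
  have hoffP : ∀ p ∈ P, Disjoint (matchVerts p) s := fun p hp =>
    Set.disjoint_left.2 fun u ⟨f, hf, hu⟩ => hoff f (hP.mem_iff.2 ⟨p, hp, hf⟩) u hu
  refine isAdmissibleMatching_iff.2
    ⟨⟨fun f hf => ?_, hM.2⟩, P, { hP with isGap := ?_, isAcyclic := ?_ }⟩
  · exact SimpleGraph.edgeSet_mono delV_le (hM.1 f hf)
  · intro p hp q hq hpq e he f hf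
    have hg := hP.isGap p hp q hq hpq e he f hf
    exact ⟨hg.1, fun a b ha hb hab => hg.2 a b ha hb
      ⟨hab, hoff e (hP.mem_iff.2 ⟨p, hp, he⟩) a ha, hoff f (hP.mem_iff.2 ⟨q, hq, hf⟩) b hb⟩⟩
  · exact fun p hp => induce_delV_of_disjoint (hoffP p hp) ▸ hP.isAcyclic p hp

end delV

section aim

variable (G : SimpleGraph V) {k : ℕ}

lemma bddAbove_card_isAdmissibleMatching [Fintype V] (k : ℕ) :
    BddAbove {m | ∃ M : Finset (Sym2 V), IsAdmissibleMatching G k M ∧ M.card = m} :=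
  ⟨Fintype.card (Sym2 V), fun _ ⟨M, _, hM⟩ => hM ▸ card_le_univ M⟩

lemma card_le_aim [Fintype V] {M : Finset (Sym2 V)} (hM : IsAdmissibleMatching G k M) :
    M.card ≤ aim G k :=
  le_csSup (bddAbove_card_isAdmissibleMatching G k) ⟨M, hM, rfl⟩

lemma isAdmissibleMatching_empty (hk : 1 ≤ k) : IsAdmissibleMatching G k ∅ :=
  isAdmissibleMatching_iff.2 ⟨⟨by simp, by simp⟩, ∅, ⟨by simp, by simp, by simp, by simpa, by simp⟩⟩

lemma exists_isAdmissibleMatching_card_eq_aim [Fintype V] (hk : 1 ≤ k) :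
    ∃ M : Finset (Sym2 V), IsAdmissibleMatching G k M ∧ M.card = aim G k :=
  Nat.sSup_mem (s := {m | ∃ M : Finset (Sym2 V), IsAdmissibleMatching G k M ∧ M.card = m})
    ⟨0, ∅, isAdmissibleMatching_empty G hk, rfl⟩ (bddAbove_card_isAdmissibleMatching G k)

end aim

section DistantLeaf

variable {G : SimpleGraph V}

lemma degree_ne_one_of_adj_of_adj {a b c : V} [Fintype (G.neighborSet b)] (hba : G.Adj b a)
    (hbc : G.Adj b c) (hac : a ≠ c) : G.degree b ≠ 1 := fun h =>
  hac ((SimpleGraph.degree_eq_one_iff_existsUnique_adj.1 h).unique hba hbc)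

lemma IsMatchingSet.eq_of_adj_of_adj [Fintype V] [DecidableRel G.Adj] {M : Finset (Sym2 V)}
    {w : V} (hM : IsMatchingSet G M) (hw : ∀ f ∈ M, w ∉ f)
    (hdistant : ((G.neighborFinset w).filter (fun u => G.degree u ≠ 1)).card ≤ 1)
    {f f' : Sym2 V} {b b' : V} (hf : f ∈ M) (hf' : f' ∈ M) (hb : b ∈ f) (hb' : b' ∈ f')
    (hwb : G.Adj w b) (hwb' : G.Adj w b') : f = f' := by
  have hnonleaf : ∀ f ∈ M, ∀ b ∈ f, G.Adj w b →
      b ∈ (G.neighborFinset w).filter (fun u => G.degree u ≠ 1) := by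
    intro f hf b hb hwb
    have hother : G.Adj b (Sym2.Mem.other hb) := by
      rw [← SimpleGraph.mem_edgeSet, Sym2.other_spec hb]
      exact hM.1 f hf
    refine mem_filter.2 ⟨(G.mem_neighborFinset w b).2 hwb,
      degree_ne_one_of_adj_of_adj hwb.symm hother fun h => hw f hf ?_⟩
    exact h ▸ Sym2.other_mem hb
  have hbb' : b = b' := card_le_one.1 hdistant _ (hnonleaf f hf b hb hwb) _
    (hnonleaf f' hf' b' hb' hwb')
  by_contra hne
  exact hM.2 f hf f' hf' hne b hb (hbb' ▸ hb')

end DistantLeaf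

end

theorem stmt_7_general {V : Type*} [Fintype V] (G : SimpleGraph V)
    [DecidableRel G.Adj] (hforest : G.IsAcyclic) (v w : V)
    (hadj : G.Adj v w) (hleaf : G.degree v = 1)
    (hdistant : ((G.neighborFinset w).filter (fun u => G.degree u ≠ 1)).card ≤ 1)
    (k : ℕ) (h1 : 2 ≤ k) :
    aim (delV G {w, v}) (k - 1) + 1 ≤ aim G k := by
  obtain ⟨M, hM', hcard⟩ :=
    exists_isAdmissibleMatching_card_eq_aim (delV G {w, v}) (k := k - 1) (by omega)
  have hM := hM'.of_delV
  have hoff : ∀ f ∈ M, ∀ u ∈ f, u ≠ w ∧ u ≠ v := fun f hf u hu => by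
    simpa [not_or] using notMem_of_mem_edgeSet_delV (hM'.1.1 f hf) hu
  have hv : ∀ u, G.Adj v u → u = w := fun u hu =>
    (SimpleGraph.degree_eq_one_iff_existsUnique_adj.1 hleaf).unique hu hadj
  have hgap : ∀ f ∈ M, (∀ b ∈ f, ¬ G.Adj w b) → IsGap G s(v, w) f := fun f hf hw =>
    isGap_mk (fun u hu => ⟨(hoff f hf u hu).2, fun h => (hoff f hf u hu).1 (hv u h)⟩)
      (fun u hu => ⟨(hoff f hf u hu).1, hw u hu⟩)
  have hvwM : s(v, w) ∉ M := fun h => (hoff _ h w (Sym2.mem_mk_right v w)).1 rfl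
  rw [← hcard, ← card_insert_of_notMem hvwM]
  apply card_le_aim
  by_cases hmeet : ∃ f₀ ∈ M, ∃ b ∈ f₀, G.Adj w b
  · obtain ⟨f₀, hf₀, b, hb, hwb⟩ := hmeet
    have hunique : ∀ f ∈ M, f ≠ f₀ → IsGap G s(v, w) f := fun f hf hne =>
      hgap f hf fun b' hb' hwb' => hne <| hM.1.eq_of_adj_of_adj
        (fun f hf hw => (hoff f hf w hw).1 rfl) hdistant hf hf₀ hb' hb hwb' hwb
    have hvw₀ : ∀ u ∈ s(v, w), u ∉ f₀ := by
      simpa using ⟨fun h => (hoff f₀ hf₀ v h).2 rfl, fun h => (hoff f₀ hf₀ w h).1 rfl⟩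
    simpa [Nat.sub_add_cancel (by omega : 1 ≤ k)] using
      hM.insert_of_forall_ne_isGap hforest hadj hf₀ hvw₀ hunique
  · push Not at hmeet
    exact (hM.insert_of_forall_isGap hadj fun f hf => hgap f hf (hmeet f hf)).mono (by omega)

/-- Let `G` be a forest with a distant edge `{w,v}`: `v` is a leaf with neighbor `w`
and at most one neighbor of `w` is not a leaf. Then for all `2 ≤ k ≤ ν(G)`,
`aim(G \\ {w,v}, k-1) + 1 ≤ aim(G,k)`. -/
theorem stmt_7 {V : Type*} [Fintype V] [DecidableEq V] (G : SimpleGraph V)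
    [DecidableRel G.Adj] (hforest : G.IsAcyclic) (v w : V)
    (hadj : G.Adj v w) (hleaf : G.degree v = 1)
    (hdistant : ((G.neighborFinset w).filter (fun u => G.degree u ≠ 1)).card ≤ 1)
    (k : ℕ) (h1 : 2 ≤ k) (h2 : k ≤ matchingNumber G) :
    aim (delV G {w, v}) (k - 1) + 1 ≤ aim G k :=
  stmt_7_general G hforest v w hadj hleaf hdistant k h1
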